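/- Let E be a real vector space equipped with an arbitrary topology, let F be a real compactly generated vector space, and let T be the compact-open topology on the set of all continuous maps from E to F. Then the subset of linear continuous maps E → F is closed in the Kelleyfication kT of T. -/

import Mathlib

open Set Filter Topology

/-- The Kelleyfication of a topology `T`: a set is open iff its trace on every `T`-compact
set agrees with the trace of some `T`-open set. -/
def Kelley {X : Type*} (T : TopologicalSpace X) : TopologicalSpace X where
  IsOpen U := ∀ K : Set X, @IsCompact X T K → ∃ V : Set X, T.IsOpen V ∧ U ∩ K = V ∩ K
  isOpen_univ K _ := ⟨univ, T.isOpen_univ, rfl⟩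
  isOpen_inter := by
    intro s t hs ht K hK
    obtain ⟨Vs, hVs, hsK⟩ := hs K hK
    obtain ⟨Vt, hVt, htK⟩ := ht K hK
    refine ⟨Vs ∩ Vt, T.isOpen_inter _ _ hVs hVt, ?_⟩
    ext x
    have h1 := Set.ext_iff.mp hsK x
    have h2 := Set.ext_iff.mp htK x
    simp only [Set.mem_inter_iff] at *
    tauto
  isOpen_sUnion := by
    intro S hS K hK
    choose! V hV1 hV2 using fun t (ht : t ∈ S) => hS t ht K hK
    refine ⟨⋃ t ∈ S, V t, ?_, ?_⟩
    · letI := T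
      exact isOpen_biUnion fun t ht => hV1 t ht
    · ext x
      simp only [Set.mem_inter_iff, Set.mem_sUnion, Set.mem_iUnion, exists_prop]
      constructor
      · rintro ⟨⟨t, htS, hxt⟩, hxK⟩
        have h := Set.ext_iff.mp (hV2 t htS) x
        simp only [Set.mem_inter_iff] at h
        exact ⟨⟨t, htS, (h.mp ⟨hxt, hxK⟩).1⟩, hxK⟩
      · rintro ⟨⟨t, htS, hxt⟩, hxK⟩
        have h := Set.ext_iff.mp (hV2 t htS) x
        simp only [Set.mem_inter_iff] at h
        exact ⟨⟨t, htS, (h.mpr ⟨hxt, hxK⟩).1⟩, hxK⟩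

/-- The k-extension of a topology `T`: like the Kelleyfication, but quantifying only over
`T`-closed `T`-compact sets. -/
def KelleyEx {X : Type*} (T : TopologicalSpace X) : TopologicalSpace X where
  IsOpen U := ∀ K : Set X, @IsCompact X T K → @IsClosed X T K →
    ∃ V : Set X, T.IsOpen V ∧ U ∩ K = V ∩ K
  isOpen_univ K _ _ := ⟨univ, T.isOpen_univ, rfl⟩
  isOpen_inter := by
    intro s t hs ht K hK hKc
    obtain ⟨Vs, hVs, hsK⟩ := hs K hK hKc
    obtain ⟨Vt, hVt, htK⟩ := ht K hK hKc
    refine ⟨Vs ∩ Vt, T.isOpen_inter _ _ hVs hVt, ?_⟩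
    ext x
    have h1 := Set.ext_iff.mp hsK x
    have h2 := Set.ext_iff.mp htK x
    simp only [Set.mem_inter_iff] at *
    tauto
  isOpen_sUnion := by
    intro S hS K hK hKc
    choose! V hV1 hV2 using fun t (ht : t ∈ S) => hS t ht K hK hKc
    refine ⟨⋃ t ∈ S, V t, ?_, ?_⟩
    · letI := T
      exact isOpen_biUnion fun t ht => hV1 t ht
    · ext x
      simp only [Set.mem_inter_iff, Set.mem_sUnion, Set.mem_iUnion, exists_prop]
      constructor
      · rintro ⟨⟨t, htS, hxt⟩, hxK⟩
        have h := Set.ext_iff.mp (hV2 t htS) x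
        simp only [Set.mem_inter_iff] at h
        exact ⟨⟨t, htS, (h.mp ⟨hxt, hxK⟩).1⟩, hxK⟩
      · rintro ⟨⟨t, htS, hxt⟩, hxK⟩
        have h := Set.ext_iff.mp (hV2 t htS) x
        simp only [Set.mem_inter_iff] at h
        exact ⟨⟨t, htS, (h.mpr ⟨hxt, hxK⟩).1⟩, hxK⟩

/-- A topology is compactly generated iff it is Hausdorff and equals its Kelleyfication. -/
def IsCG {X : Type*} (T : TopologicalSpace X) : Prop :=
  @T2Space X T ∧ Kelley T = T

/-- Local compactness in the sense of the paper: every point of an open set `V` has an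
open neighbourhood contained in a compact subset of `V`. -/
def LocCompact {Y : Type*} (t : TopologicalSpace Y) : Prop :=
  ∀ y : Y, ∀ V : Set Y, t.IsOpen V → y ∈ V →
    ∃ K U : Set Y, y ∈ U ∧ t.IsOpen U ∧ U ⊆ K ∧ K ⊆ V ∧ @IsCompact Y t K

/-- A real compactly generated vector space: a compactly generated topology for which the
algebraic operations are continuous from the Kelleyfications of the product topologies. -/
def IsCGVS {X : Type*} [AddCommGroup X] [Module ℝ X] (T : TopologicalSpace X) : Prop :=
  IsCG T ∧
  Continuous[Kelley (@instTopologicalSpaceProd X X T T), T] (fun p : X × X => p.1 + p.2) ∧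
  Continuous[Kelley (@instTopologicalSpaceProd ℝ X inferInstance T), T]
    (fun p : ℝ × X => p.1 • p.2)

/-- Sequential completeness of a topologized additive group: every Cauchy sequence converges. -/
def SeqComplete {X : Type*} [AddCommGroup X] (U : TopologicalSpace X) : Prop :=
  ∀ u : ℕ → X, (∀ V ∈ @nhds X U 0, ∃ N : ℕ, ∀ m ≥ N, ∀ n ≥ N, u m - u n ∈ V) →
    ∃ x : X, Filter.Tendsto u Filter.atTop (@nhds X U x)

/-- Seip-convenient space: a compactly generated real vector space whose topology is the
Kelleyfication of a sequentially complete Hausdorff locally convex vector topology. -/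
def IsSeipConvenient {X : Type*} [AddCommGroup X] [Module ℝ X] (T : TopologicalSpace X) : Prop :=
  IsCGVS T ∧ ∃ U : TopologicalSpace X,
    @IsTopologicalAddGroup X U _ ∧ @ContinuousSMul ℝ X _ _ U ∧
    @LocallyConvexSpace ℝ X _ _ _ _ U ∧ @T2Space X U ∧ SeqComplete U ∧ T = Kelley U

/-- The compact-open topology on the full function space, generated by the usual subbasis. -/
def coTop {X Y : Type*} (tX : TopologicalSpace X) (tY : TopologicalSpace Y) :
    TopologicalSpace (X → Y) :=
  TopologicalSpace.generateFrom
    {S | ∃ (K : Set X) (V : Set Y), @IsCompact X tX K ∧ tY.IsOpen V ∧ S = {f | f '' K ⊆ V}}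

/-- `γ` is Riemann integrable to `x` on `[a,b]` with respect to the topology `T`. -/
def RiemannIntegrableTo {E : Type*} [AddCommGroup E] [Module ℝ E]
    (T : TopologicalSpace E) (a b : ℝ) (γ : ℝ → E) (x : E) : Prop :=
  ∀ V ∈ @nhds E T x, ∃ δ : ℝ, 0 < δ ∧ ∀ (k : ℕ) (t s : ℕ → ℝ),
    t 0 = a → t k = b → (∀ i < k, t i ≤ t (i + 1)) →
    (∀ i < k, t (i + 1) - t i < δ) →
    (∀ i < k, t i ≤ s i ∧ s i ≤ t (i + 1)) →
    (∑ i ∈ Finset.range k, (t (i + 1) - t i) • γ (s i)) ∈ V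

/-- `c` is differentiable to `x` at `t₀` (within `J`) with respect to the topology `T`. -/
def DiffTo {E : Type*} [AddCommGroup E] [Module ℝ E] (T : TopologicalSpace E)
    (J : Set ℝ) (c : ℝ → E) (t₀ : ℝ) (x : E) : Prop :=
  ∀ V ∈ @nhds E T x, ∃ δ : ℝ, 0 < δ ∧ ∀ t : ℝ, t₀ + t ∈ J → 0 < |t| → |t| < δ →
    t⁻¹ • (c (t₀ + t) - c t₀) ∈ V

/-!
Linearity of `f` is the conjunction of the equations `f (x + y) = f x + f y` and
`f (c • x) = c • f x`, so it suffices that both sides of each are `kT`-continuous in `f` and `F`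
is Hausdorff. Evaluation at a point is `T`-continuous, hence `kT`-continuous. The pair
`f ↦ (f x, f y)` is `T`-continuous into `F × F`; Kelleyfication is functorial, so it is continuous
from `kT` into `k(F × F)`, on which addition is continuous by assumption (likewise for `•`).
-/

section Kelley

variable {X Y Z : Type*}

theorem kelley_le (T : TopologicalSpace X) : Kelley T ≤ T :=
  fun U hU _ _ => ⟨U, hU, rfl⟩

theorem Continuous.kelley {tX : TopologicalSpace X} {tY : TopologicalSpace Y} {f : X → Y}
    (hf : Continuous[tX, tY] f) : Continuous[Kelley tX, Kelley tY] f := by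
  refine continuous_def.mpr fun U hU K hK => ?_
  obtain ⟨V, hV, hUV⟩ := hU (f '' K) (hK.image hf)
  refine ⟨f ⁻¹' V, continuous_def.mp hf V hV, ?_⟩
  calc f ⁻¹' U ∩ K = f ⁻¹' (U ∩ f '' K) ∩ K := by
        rw [preimage_inter, inter_assoc, inter_eq_right.mpr (subset_preimage_image f K)]
    _ = f ⁻¹' V ∩ K := by
        rw [hUV, preimage_inter, inter_assoc, inter_eq_right.mpr (subset_preimage_image f K)]

theorem isClosed_kelley_setOf_eq_comp {tX : TopologicalSpace X} {tY : TopologicalSpace Y}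
    {tZ : TopologicalSpace Z} [@T2Space Z tZ] {u : X → Z} {g : Y → Z} {f : X → Y}
    (hu : Continuous[tX, tZ] u) (hg : Continuous[Kelley tY, tZ] g)
    (hf : Continuous[tX, tY] f) : IsClosed[Kelley tX] {a | u a = g (f a)} :=
  letI := Kelley tX
  isClosed_eq (continuous_le_dom (kelley_le tX) hu)
    (@Continuous.comp X Y Z (Kelley tX) (Kelley tY) tZ f g hg hf.kelley)

end Kelley

theorem setOf_isLinearMap_eq_iInter {R M N : Type*} [Semiring R] [AddCommMonoid M]
    [AddCommMonoid N] [Module R M] [Module R N] :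
    {f : M → N | IsLinearMap R f} =
      (⋂ (x : M) (y : M), {f | f (x + y) = f x + f y}) ∩
        ⋂ (c : R) (x : M), {f | f (c • x) = c • f x} := by
  ext f
  simp only [mem_ofPred_eq, mem_inter_iff, mem_iInter]
  exact ⟨fun h => ⟨h.1, h.2⟩, fun h => ⟨h.1, h.2⟩⟩

theorem isClosed_kelley_setOf_isLinearMap {X R M F : Type*} [Semiring R] [TopologicalSpace R]
    [AddCommMonoid M] [Module R M] [AddCommMonoid F] [Module R F] [tF : TopologicalSpace F]
    [T2Space F] (tX : TopologicalSpace X) (φ : X → M → F)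
    (hφ : ∀ m, Continuous[tX, tF] fun a => φ a m)
    (hadd : Continuous[Kelley instTopologicalSpaceProd, tF] fun p : F × F => p.1 + p.2)
    (hsmul : Continuous[Kelley instTopologicalSpaceProd, tF] fun p : R × F => p.1 • p.2) :
    IsClosed[Kelley tX] {a | IsLinearMap R (φ a)} := by
  have hadditive : ∀ x y : M, IsClosed[Kelley tX] {a | φ a (x + y) = φ a x + φ a y} :=
    fun x y => isClosed_kelley_setOf_eq_comp (g := fun p : F × F => p.1 + p.2) (hφ (x + y)) hadd
      ((hφ x).prodMk (hφ y))
  have hhomogeneous : ∀ (c : R) (x : M), IsClosed[Kelley tX] {a | φ a (c • x) = c • φ a x} :=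
    fun c x => isClosed_kelley_setOf_eq_comp (g := fun p : R × F => p.1 • p.2) (hφ (c • x))
      hsmul (continuous_const.prodMk (hφ x))
  let _ := Kelley tX
  change IsClosed (φ ⁻¹' {f : M → F | IsLinearMap R f})
  rw [setOf_isLinearMap_eq_iInter, preimage_inter, preimage_iInter₂, preimage_iInter₂]
  exact .inter (isClosed_iInter fun x => isClosed_iInter (hadditive x))
    (isClosed_iInter fun c => isClosed_iInter (hhomogeneous c))

/-- For a real vector space `E` with an arbitrary topology and a real compactly
generated vector space `F`, the set of linear maps among all continuous maps `E → F` is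
closed in the Kelleyfication of the compact-open topology. -/
theorem linear_closed_in_kelley_compactOpen {E F : Type*}
    [AddCommGroup E] [Module ℝ E] [AddCommGroup F] [Module ℝ F]
    [tE : TopologicalSpace E] [tF : TopologicalSpace F] (hF : IsCGVS tF) :
    @IsClosed C(E, F) (Kelley (ContinuousMap.compactOpen : TopologicalSpace C(E, F)))
      {f : C(E, F) | IsLinearMap ℝ ⇑f} := by
  obtain ⟨⟨_, -⟩, hadd, hsmul⟩ := hF
  exact isClosed_kelley_setOf_isLinearMap _ (fun f : C(E, F) => ⇑f) continuous_eval_const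
    hadd hsmul
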